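/- Let Φ be a multiflow on a compact Hausdorff space X and U ⊆ X. Then for every fixed t > 0, the strict omega limit set with respect to the relation Φᵗ is contained in the strict omega limit set with respect to Φ: ω̂(U;Φᵗ) ⊆ ω̂(U;Φ). If in addition U is eventually confining for Φ, equality holds: ω̂(U;Φᵗ) = ω̂(U;Φ). -/
import Mathlib


open Set

/-- The image of a set `S` under a relation `f ⊆ X × X`. -/
def RelImage {X : Type*} (f : Set (X × X)) (S : Set X) : Set X :=
  {y | ∃ x ∈ S, (x, y) ∈ f}

/-- Composition of relations: `RelComp f g` is `f ∘ g` (apply `g` first). -/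
def RelComp {X : Type*} (f g : Set (X × X)) : Set (X × X) :=
  {p | ∃ z, (p.1, z) ∈ g ∧ (z, p.2) ∈ f}

/-- The fixed-time relation `Φᵗ` of a multiflow `Φ ⊆ [0,∞) × X × X`. -/
def MFt {X : Type*} (Φ : Set (ℝ × X × X)) (t : ℝ) : Set (X × X) :=
  {p | (t, p.1, p.2) ∈ Φ}

/-- `Φ` is a multiflow: it lives over nonnegative times, `Φ⁰` is the identity
relation, and `Φ^{s+t} = Φˢ ∘ Φᵗ`. (Closedness of `Φ` is stated separately.) -/
def IsMultiflow {X : Type*} (Φ : Set (ℝ × X × X)) : Prop :=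
  (∀ p ∈ Φ, 0 ≤ p.1) ∧
  MFt Φ 0 = {p | p.2 = p.1} ∧
  ∀ s t : ℝ, 0 ≤ s → 0 ≤ t → MFt Φ (s + t) = RelComp (MFt Φ s) (MFt Φ t)

/-- The strict omega limit set of `U` under the relation `f`. -/
def strictOmegaRel {X : Type*} [TopologicalSpace X] (f : Set (X × X)) (U : Set X) : Set X :=
  ⋂ m : ℕ, closure (⋃ n ∈ Ici m, (RelImage f)^[n] U)

/-- The strict omega limit set of `U` under the multiflow `Φ`. -/
def strictOmegaMF {X : Type*} [TopologicalSpace X] (Φ : Set (ℝ × X × X)) (U : Set X) :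
    Set X :=
  ⋂ s ∈ Ici (0 : ℝ), closure (⋃ t ∈ Ici s, RelImage (MFt Φ t) U)

lemma relImage_comp {X : Type*} (f g : Set (X × X)) (S : Set X) :
    RelImage (RelComp f g) S = RelImage f (RelImage g S) := by
  ext y
  constructor
  · rintro ⟨x, hx, z, hz1, hz2⟩
    exact ⟨z, ⟨x, hx, hz1⟩, hz2⟩
  · rintro ⟨z, ⟨x, hx, hz1⟩, hz2⟩
    exact ⟨x, hx, z, hz1, hz2⟩

lemma relImage_mono {X : Type*} (f : Set (X × X)) {S T : Set X} (h : S ⊆ T) :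
    RelImage f S ⊆ RelImage f T := by
  rintro y ⟨x, hx, hxy⟩
  exact ⟨x, h hx, hxy⟩

lemma iterate_relImage {X : Type*} {Φ : Set (ℝ × X × X)} (hΦ : IsMultiflow Φ)
    {t : ℝ} (ht : 0 ≤ t) (U : Set X) (n : ℕ) :
    (RelImage (MFt Φ t))^[n] U = RelImage (MFt Φ (n * t)) U := by
  induction n with
  | zero =>
    simp only [Function.iterate_zero, id, Nat.cast_zero, zero_mul]
    rw [hΦ.2.1]
    ext y
    constructor
    · intro hy; exact ⟨y, hy, rfl⟩
    · rintro ⟨x, hx, h⟩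
      simp only [mem_setOf_eq] at h
      rwa [h]
  | succ n ih =>
    rw [Function.iterate_succ_apply', ih]
    have hcast : ((n + 1 : ℕ) : ℝ) * t = t + (n : ℝ) * t := by push_cast; ring
    rw [hcast, hΦ.2.2 t ((n : ℝ) * t) ht (by positivity), relImage_comp]

theorem stmt16 {X : Type*} [TopologicalSpace X] [CompactSpace X] [T2Space X]
    (Φ : Set (ℝ × X × X)) (hcl : IsClosed Φ) (hΦ : IsMultiflow Φ) (U : Set X) :
    (∀ t : ℝ, 0 < t → strictOmegaRel (MFt Φ t) U ⊆ strictOmegaMF Φ U) ∧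
    ((∃ t₀ : ℝ, 0 < t₀ ∧ ∀ t, t₀ ≤ t → RelImage (MFt Φ t) U ⊆ U) →
      ∀ t : ℝ, 0 < t → strictOmegaRel (MFt Φ t) U = strictOmegaMF Φ U) := by
  have key : ∀ t : ℝ, 0 < t → strictOmegaRel (MFt Φ t) U ⊆ strictOmegaMF Φ U := by
    intro t ht x hx
    simp only [strictOmegaMF, mem_iInter, mem_Ici]
    intro s hs
    obtain ⟨m, hm⟩ := exists_nat_ge (s / t)
    have hmt : s ≤ (m : ℝ) * t := by
      rw [div_le_iff₀ ht] at hm; linarith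
    have hx' : x ∈ closure (⋃ n ∈ Ici m, (RelImage (MFt Φ t))^[n] U) :=
      mem_iInter.mp hx m
    refine closure_mono ?_ hx'
    refine iUnion₂_subset fun n hn => ?_
    rw [iterate_relImage hΦ ht.le U n]
    have hnt : s ≤ (n : ℝ) * t := by
      have : (m : ℝ) ≤ (n : ℝ) := Nat.cast_le.mpr hn
      nlinarith
    exact subset_iUnion₂_of_subset ((n : ℝ) * t) hnt subset_rfl
  refine ⟨key, ?_⟩
  rintro ⟨t₀, ht₀, hconf⟩ t ht
  refine subset_antisymm (key t ht) ?_
  intro x hx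
  simp only [strictOmegaRel, mem_iInter]
  intro m
  have hx' : x ∈ closure (⋃ τ ∈ Ici ((m : ℝ) * t + t₀), RelImage (MFt Φ τ) U) := by
    have := mem_iInter₂.mp hx ((m : ℝ) * t + t₀)
      (add_nonneg (mul_nonneg (Nat.cast_nonneg m) ht.le) ht₀.le)
    exact this
  refine closure_mono ?_ hx'
  refine iUnion₂_subset fun τ hτ => ?_
  rw [mem_Ici] at hτ
  set n : ℕ := ⌊(τ - t₀) / t⌋₊ with hn
  have hnn : (0 : ℝ) ≤ (τ - t₀) / t := by
    apply div_nonneg _ ht.le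
    have : (0 : ℝ) ≤ (m : ℝ) * t := by positivity
    linarith
  have hmn : m ≤ n := Nat.le_floor (by
    rw [le_div_iff₀ ht]; linarith)
  have hfl : (n : ℝ) ≤ (τ - t₀) / t := Nat.floor_le hnn
  have hntτ : (n : ℝ) * t ≤ τ - t₀ := (le_div_iff₀ ht).mp hfl
  set r : ℝ := τ - (n : ℝ) * t with hr
  have hrt₀ : t₀ ≤ r := by simp only [hr]; linarith
  have hτeq : τ = (n : ℝ) * t + r := by simp [hr]
  have hsplit : RelImage (MFt Φ τ) U ⊆ RelImage (MFt Φ ((n : ℝ) * t)) U := by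
    rw [hτeq, hΦ.2.2 ((n : ℝ) * t) r (by positivity) (le_trans ht₀.le hrt₀),
      relImage_comp]
    exact relImage_mono _ (hconf r hrt₀)
  refine subset_trans hsplit ?_
  rw [← iterate_relImage hΦ ht.le U n]
  exact subset_iUnion₂_of_subset n hmn subset_rfl
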